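/- Let N ≥ 3, α ∈ ℂ^N, let Ω ⊆ {x ∈ ℂ^N : x_a ≠ x_b for all a ≠ b} be open, let 1 ≤ p, q, r ≤ N be pairwise distinct, and let u : Ω → ℂ be holomorphic with M_{q,r}(α)u = 0 on Ω, i.e. ∂_q∂_r u + (α_r/(x_q−x_r))∂_q u + (α_q/(x_r−x_q))∂_r u = 0. Then on Ω: (i) (x_p − x_q)·∂_q( L_{q,r}(α)u ) + (α_q + 1)·L_{q,r}(α)u = (α_q + 1)·( (x_p − x_r)·∂_r u + α_r·u ), i.e. L_{p,q}(α+e_q)∘L_{q,r}(α)u = (α_q+1)·L_{p,r}(α)u; (ii) (x_q − x_r)·∂_r( L_{p,q}(α)u ) + α_r·L_{p,q}(α)u = α_q·( (x_p − x_r)·∂_r u + α_r·u ), i.e. L_{q,r}(α)∘L_{p,q}(α)u = α_q·L_{p,r}(α)u. Here L_{a,b}(β)w = (x_a − x_b)∂_b w + β_b w and L_{q,r}(α)u = (x_q−x_r)∂_r u + α_r u, L_{p,q}(α)u = (x_p−x_q)∂_q u + α_q u. -/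

import Mathlib

/-!
Expanding `L_{p,q}(α+e_q) L_{q,r}(α) u` and `L_{q,r}(α) L_{p,q}(α) u` by the product rule (and the
symmetry of second derivatives), the only second-order term is `(x_p − x_q)(x_q − x_r) ∂_q∂_r u`.
Multiplied by `x_q − x_r`, the equation `M_{q,r}(α) u = 0` turns `(x_q − x_r) ∂_q∂_r u` into
`α_q ∂_r u − α_r ∂_q u`, and both identities become polynomial identities in the first derivatives.
-/

/-- Partial derivative of a function on `ℂ^N` with respect to the `p`-th coordinate. -/
noncomputable def pder {N : ℕ} (p : Fin N) (f : (Fin N → ℂ) → ℂ) : (Fin N → ℂ) → ℂ :=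
  fun x => fderiv ℂ f x (Pi.single p (1 : ℂ))

/-- The contiguity operator `L_{p,q}(α) = (x_p − x_q)∂_q + α_q` (here given by the
coefficient `β_b` at the second index, so `Lop` below takes the scalar directly). -/
noncomputable def Lop {N : ℕ} (α : Fin N → ℂ) (p q : Fin N) (f : (Fin N → ℂ) → ℂ) :
    (Fin N → ℂ) → ℂ :=
  fun x => (x p - x q) * pder q f x + α q * f x

section

variable {N : ℕ} {f : (Fin N → ℂ) → ℂ} {x : Fin N → ℂ}

theorem AnalyticAt.differentiableAt_pder (hf : AnalyticAt ℂ f x) (a : Fin N) :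
    DifferentiableAt ℂ (pder a f) x :=
  hf.fderiv.differentiableAt.clm_apply (differentiableAt_const _)

theorem AnalyticAt.pder_comm (hf : AnalyticAt ℂ f x) (a b : Fin N) :
    pder a (pder b f) x = pder b (pder a f) x := by
  have h : ∀ a b : Fin N, pder a (pder b f) x
      = fderiv ℂ (fderiv ℂ f) x (Pi.single a 1) (Pi.single b 1) := fun a b => by
    change fderiv ℂ (fun y => fderiv ℂ f y (Pi.single b 1)) x (Pi.single a 1) = _
    rw [fderiv_clm_apply hf.fderiv.differentiableAt (differentiableAt_const _)]
    simp
  rw [h, h]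
  exact (hf.contDiffAt (n := 2)).isSymmSndFDerivAt (by simp) _ _

theorem pder_Lop (α : Fin N → ℂ) (a b c : Fin N) (hf : DifferentiableAt ℂ f x)
    (hbf : DifferentiableAt ℂ (pder b f) x) :
    pder c (Lop α a b f) x
      = ((Pi.single c 1 : Fin N → ℂ) a - (Pi.single c 1 : Fin N → ℂ) b) * pder b f x
        + (x a - x b) * pder c (pder b f) x + α b * pder c f x := by
  have h : HasFDerivAt (Lop α a b f) _ x :=
    (((hasFDerivAt_apply a x).fun_sub (hasFDerivAt_apply b x)).fun_mul hbf.hasFDerivAt).fun_add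
      (hf.hasFDerivAt.const_mul (α b))
  rw [pder, h.fderiv]
  simp only [pder, add_apply, smul_apply, smul_eq_mul,
    sub_apply, ContinuousLinearMap.proj_apply, add_left_inj]
  ring

theorem sub_mul_pder_pder_of_epd {α : Fin N → ℂ} {q r : Fin N} (hx : x q ≠ x r)
    (h : pder q (pder r f) x + (α r / (x q - x r)) * pder q f x
        + (α q / (x r - x q)) * pder r f x = 0) :
    (x q - x r) * pder q (pder r f) x = α q * pder r f x - α r * pder q f x := by
  have hqr : x q - x r ≠ 0 := sub_ne_zero.2 hx
  have hrq : x r - x q ≠ 0 := sub_ne_zero.2 hx.symm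
  field_simp at h
  exact mul_left_cancel₀ hrq (by linear_combination h)

theorem Lop_add_single_comp_Lop (hf : AnalyticAt ℂ f x) (α : Fin N → ℂ) {p q r : Fin N}
    (hepd : (x q - x r) * pder q (pder r f) x = α q * pder r f x - α r * pder q f x)
    (hqr : q ≠ r) :
    Lop (α + Pi.single q 1) p q (Lop α q r f) x = (α q + 1) * Lop α p r f x := by
  simp only [Lop, Pi.add_apply, Pi.single_eq_same]
  rw [pder_Lop α q r q hf.differentiableAt (hf.differentiableAt_pder r)]
  simp only [Pi.single_eq_same, Pi.single_eq_of_ne hqr.symm, sub_zero, one_mul]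
  linear_combination (x p - x q) * hepd

theorem Lop_comp_Lop (hf : AnalyticAt ℂ f x) (α : Fin N → ℂ) {p q r : Fin N}
    (hepd : (x q - x r) * pder q (pder r f) x = α q * pder r f x - α r * pder q f x)
    (hpr : p ≠ r) (hqr : q ≠ r) :
    Lop α q r (Lop α p q f) x = α q * Lop α p r f x := by
  simp only [Lop]
  rw [pder_Lop α p q r hf.differentiableAt (hf.differentiableAt_pder q), hf.pder_comm r q]
  simp only [Pi.single_eq_of_ne hpr, Pi.single_eq_of_ne hqr, sub_zero, zero_mul, zero_add]
  linear_combination (x p - x q) * hepd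

end

theorem stmt_16_general {N : ℕ} (α : Fin N → ℂ)
    (Ω : Set (Fin N → ℂ))
    (hΩsub : Ω ⊆ {x | ∀ a b : Fin N, a ≠ b → x a ≠ x b})
    (p q r : Fin N) (hqr : q ≠ r) (hpr : p ≠ r)
    (u : (Fin N → ℂ) → ℂ) (hu : AnalyticOnNhd ℂ u Ω)
    (hueq : ∀ x ∈ Ω,
      pder q (pder r u) x + (α r / (x q - x r)) * pder q u x
        + (α q / (x r - x q)) * pder r u x = 0) :
    ∀ x ∈ Ω,
      ((x p - x q) * pder q (Lop α q r u) x + (α q + 1) * Lop α q r u x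
        = (α q + 1) * ((x p - x r) * pder r u x + α r * u x)) ∧
      ((x q - x r) * pder r (Lop α p q u) x + α r * Lop α p q u x
        = α q * ((x p - x r) * pder r u x + α r * u x)) := by
  intro x hx
  have hux := hu x hx
  have hepd := sub_mul_pder_pder_of_epd (hΩsub hx q r hqr) (hueq x hx)
  refine ⟨?_, Lop_comp_Lop hux α hepd hpr hqr⟩
  simpa only [Lop, Pi.add_apply, Pi.single_eq_same] using
    Lop_add_single_comp_Lop hux α (p := p) hepd hqr

/-- Lemma 4.7: on a solution `u` of `M_{q,r}(α)u = 0`,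
(i) `L_{p,q}(α+e_q)(L_{q,r}(α)u) = (α_q+1)·L_{p,r}(α)u` and
(ii) `L_{q,r}(α)(L_{p,q}(α)u) = α_q·L_{p,r}(α)u`. -/
theorem stmt_16 {N : ℕ} (hN : 3 ≤ N) (α : Fin N → ℂ)
    (Ω : Set (Fin N → ℂ)) (hΩ : IsOpen Ω)
    (hΩsub : Ω ⊆ {x | ∀ a b : Fin N, a ≠ b → x a ≠ x b})
    (p q r : Fin N) (hpq : p ≠ q) (hqr : q ≠ r) (hpr : p ≠ r)
    (u : (Fin N → ℂ) → ℂ) (hu : AnalyticOnNhd ℂ u Ω)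
    (hueq : ∀ x ∈ Ω,
      pder q (pder r u) x + (α r / (x q - x r)) * pder q u x
        + (α q / (x r - x q)) * pder r u x = 0) :
    ∀ x ∈ Ω,
      ((x p - x q) * pder q (Lop α q r u) x + (α q + 1) * Lop α q r u x
        = (α q + 1) * ((x p - x r) * pder r u x + α r * u x)) ∧
      ((x q - x r) * pder r (Lop α p q u) x + α r * Lop α p q u x
        = α q * ((x p - x r) * pder r u x + α r * u x)) :=
  stmt_16_general α Ω hΩsub p q r hqr hpr u hu hueq
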